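/- arXiv:2304.06313 — 2 statements merged into one kernel-verified Lean document; each statement's English description precedes it below -/
import Mathlib

section
/- For every real t with 0 < t < 1, the threshold function s ↦ t·(1 − α(1 − α)²/(2α³ − 4α² + 1)) with α = s/t is strictly decreasing in s on the interval (0, t/2): for a fixed combined power t of the selfish pool and honest miners, a larger selfish pool strictly lowers the minimum power a piggybacking pool needs in order to out-mine the public branch. -/
/-! The threshold is `t * (1 - piggybackRatio (s / t))`, so it suffices that `piggybackRatio`
increases on `[0, 1/2)`, where its denominator `2α³ - 4α² + 1 ≥ 1 - 4α²` is positive.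
After cross-multiplying, the difference of the two sides factors as
`(b - a) * ((1 - a - b) ^ 2 + a * b * (3 - 2 * (a + b)))`, which is positive for
`0 ≤ a < b < 1/2`. -/

noncomputable def piggybackRatio (α : ℝ) : ℝ :=
  α * (1 - α) ^ 2 / (2 * α ^ 3 - 4 * α ^ 2 + 1)

lemma piggybackRatio_denom_pos {α : ℝ} (h0 : 0 ≤ α) (h1 : α < 1 / 2) :
    0 < 2 * α ^ 3 - 4 * α ^ 2 + 1 := by
  nlinarith

lemma piggybackRatio_cross_mul_sub (a b : ℝ) :
    b * (1 - b) ^ 2 * (2 * a ^ 3 - 4 * a ^ 2 + 1) - a * (1 - a) ^ 2 * (2 * b ^ 3 - 4 * b ^ 2 + 1)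
      = (b - a) * ((1 - a - b) ^ 2 + a * b * (3 - 2 * (a + b))) := by
  ring

theorem strictMonoOn_piggybackRatio : StrictMonoOn piggybackRatio (Set.Ico 0 (1 / 2)) := by
  rintro a ⟨ha0, ha1⟩ b ⟨hb0, hb1⟩ hab
  have hfactor : 0 < (b - a) * ((1 - a - b) ^ 2 + a * b * (3 - 2 * (a + b))) :=
    mul_pos (sub_pos.2 hab) <| add_pos_of_pos_of_nonneg (pow_pos (by linarith) 2)
      (mul_nonneg (mul_nonneg ha0 hb0) (by linarith))
  rw [piggybackRatio, piggybackRatio,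
    div_lt_div_iff₀ (piggybackRatio_denom_pos ha0 ha1) (piggybackRatio_denom_pos hb0 hb1)]
  linarith [piggybackRatio_cross_mul_sub a b]

theorem piggyback_threshold_strict_anti_general (t : ℝ) (ht0 : 0 < t)
    (s₁ s₂ : ℝ) (h0 : 0 < s₁) (h12 : s₁ < s₂) (h2 : s₂ < t/2) :
    t * (1 - (s₂ / t) * (1 - s₂ / t) ^ 2
          / (2 * (s₂ / t) ^ 3 - 4 * (s₂ / t) ^ 2 + 1))
      < t * (1 - (s₁ / t) * (1 - s₁ / t) ^ 2
          / (2 * (s₁ / t) ^ 3 - 4 * (s₁ / t) ^ 2 + 1)) := by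
  have hα₁₂ : s₁ / t < s₂ / t := div_lt_div_of_pos_right h12 ht0
  have hα₂ : s₂ / t < 1 / 2 := (div_lt_iff₀ ht0).2 (by linarith)
  have hα₁ : 0 ≤ s₁ / t := (div_pos h0 ht0).le
  have hratio : piggybackRatio (s₁ / t) < piggybackRatio (s₂ / t) :=
    strictMonoOn_piggybackRatio ⟨hα₁, hα₁₂.trans hα₂⟩ ⟨hα₁.trans hα₁₂.le, hα₂⟩ hα₁₂
  exact mul_lt_mul_of_pos_left (sub_lt_sub_left hratio 1) ht0

/-- For every `t` with `0 < t < 1`, the piggybacking threshold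
`s ↦ t·(1 − α(1 − α)²/(2α³ − 4α² + 1))` with `α = s/t` is strictly decreasing in
`s` on `(0, t/2)`: a larger selfish pool strictly lowers the minimum power a
piggybacking pool needs to out-mine the public branch. -/
theorem piggyback_threshold_strict_anti (t : ℝ) (ht0 : 0 < t) (ht1 : t < 1)
    (s₁ s₂ : ℝ) (h0 : 0 < s₁) (h12 : s₁ < s₂) (h2 : s₂ < t/2) :
    t * (1 - (s₂ / t) * (1 - s₂ / t) ^ 2
          / (2 * (s₂ / t) ^ 3 - 4 * (s₂ / t) ^ 2 + 1))
      < t * (1 - (s₁ / t) * (1 - s₁ / t) ^ 2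
          / (2 * (s₁ / t) ^ 3 - 4 * (s₁ / t) ^ 2 + 1)) :=
  piggyback_threshold_strict_anti_general t ht0 s₁ s₂ h0 h12 h2
end

section
/- For every real number α with 0 < α < 1/2, the per-block discard probability (1 − α)·(1 − p₀ − p₀′), where p₀ = (α − 2α²)/(α(2α³ − 4α² + 1)) and p₀′ = (1 − α)(α − 2α²)/(2α³ − 4α² + 1), equals α(1 − α)²/(2α³ − 4α² + 1) and is strictly positive; hence a selfish-mining pool of any relative size α ∈ (0, 1/2) causes blocks to be discarded at a strictly positive rate. -/
/-! Both stationary masses share the factor `(1 - 2α) / (2α³ - 4α² + 1)`, and subtracting them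
from `1` leaves `α(1 - α) / (2α³ - 4α² + 1)`. The denominator is `(1 - 4α²) + 2α³`, a sum of
nonnegative terms that do not vanish together on `[0, 1/2]`, so the discard rate is a quotient of
positive numbers. -/

lemma selfishMining_denom_pos {α : ℝ} (h0 : 0 ≤ α) (h1 : α ≤ 1 / 2) :
    0 < 2 * α ^ 3 - 4 * α ^ 2 + 1 := by
  nlinarith

lemma one_sub_selfishMining_stationary_masses {α : ℝ} (hα : α ≠ 0)
    (hD : 2 * α ^ 3 - 4 * α ^ 2 + 1 ≠ 0) :
    1 - (α - 2 * α ^ 2) / (α * (2 * α ^ 3 - 4 * α ^ 2 + 1))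
        - (1 - α) * (α - 2 * α ^ 2) / (2 * α ^ 3 - 4 * α ^ 2 + 1)
      = α * (1 - α) / (2 * α ^ 3 - 4 * α ^ 2 + 1) := by
  -- `field_simp` only uses `hD` once the denominator is an atom.
  set D := 2 * α ^ 3 - 4 * α ^ 2 + 1 with hD_def
  field_simp
  rw [hD_def]
  ring

/-- For `0 < α < 1/2`, the per-block discard probability `(1 − α)(1 − p₀ − p₀′)`
of the Eyal–Sirer selfish-mining chain, where
`p₀ = (α − 2α²)/(α(2α³ − 4α² + 1))` and `p₀′ = (1 − α)(α − 2α²)/(2α³ − 4α² + 1)`,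
equals `α(1 − α)²/(2α³ − 4α² + 1)` and is strictly positive: selfish mining
causes blocks to be discarded at a strictly positive rate. -/
theorem discard_rate_pos (α : ℝ) (h0 : 0 < α) (h1 : α < 1/2) :
    (1 - α) *
        (1 - (α - 2 * α ^ 2) / (α * (2 * α ^ 3 - 4 * α ^ 2 + 1))
           - (1 - α) * (α - 2 * α ^ 2) / (2 * α ^ 3 - 4 * α ^ 2 + 1))
      = α * (1 - α) ^ 2 / (2 * α ^ 3 - 4 * α ^ 2 + 1) ∧
    0 < α * (1 - α) ^ 2 / (2 * α ^ 3 - 4 * α ^ 2 + 1) := by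
  have hD : 0 < 2 * α ^ 3 - 4 * α ^ 2 + 1 := selfishMining_denom_pos h0.le h1.le
  have hβ : 0 < 1 - α := by linarith
  refine ⟨?_, by positivity⟩
  rw [one_sub_selfishMining_stationary_masses h0.ne' hD.ne', mul_div_assoc', ← mul_assoc]
  ring
end
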